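/- Decomposition of bunches under a context: if Π(Δ) = Π'(φ) for bunches/contexts Π, Π', bunch Δ, and formula φ, then either (a) there exists a context Π₀ with Δ = Π₀(φ) and Π' = Π ∘ Π₀, or (b) there exist functions Π₀, Π₁ from bunches to bunched contexts such that for all bunches Λ, Λ': Π(Λ) = Π₀(Λ)(φ), Π'(Λ) = Π₁(Λ)(Δ), and Π₀(Λ)(Λ') = Π₁(Λ')(Λ). -/

import Mathlib

/-- Formulas of BI. -/
inductive Frml : Type
  | atom : Nat → Frml
  | top : Frml
  | bot : Frml
  | emp : Frml
  | and : Frml → Frml → Frml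
  | or : Frml → Frml → Frml
  | imp : Frml → Frml → Frml
  | sep : Frml → Frml → Frml
  | wand : Frml → Frml → Frml

/-- Bunches: trees with formula leaves, multiplicative/additive units and nodes. -/
inductive Bunch : Type
  | frml : Frml → Bunch
  | mempty : Bunch    -- ∅ₘ
  | aempty : Bunch    -- ∅ₐ
  | comma : Bunch → Bunch → Bunch   -- multiplicative ','
  | semic : Bunch → Bunch → Bunch   -- additive ';'

/-- Bunched contexts: bunches with a single hole. -/
inductive BCtx : Type
  | hole : BCtx
  | commaL : BCtx → Bunch → BCtx
  | commaR : Bunch → BCtx → BCtx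
  | semicL : BCtx → Bunch → BCtx
  | semicR : Bunch → BCtx → BCtx

/-- Filling the hole of a bunched context with a bunch. -/
def BCtx.fill : BCtx → Bunch → Bunch
  | .hole, Δ => Δ
  | .commaL C Γ, Δ => .comma (C.fill Δ) Γ
  | .commaR Γ C, Δ => .comma Γ (C.fill Δ)
  | .semicL C Γ, Δ => .semic (C.fill Δ) Γ
  | .semicR Γ C, Δ => .semic Γ (C.fill Δ)

/-- Equivalence of bunches: commutative-monoid laws for (',', ∅ₘ) and (';', ∅ₐ),
under arbitrary bunched contexts. -/
inductive BEquiv : Bunch → Bunch → Prop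
  | refl (Δ : Bunch) : BEquiv Δ Δ
  | symm {Δ Δ' : Bunch} : BEquiv Δ Δ' → BEquiv Δ' Δ
  | trans {Δ₁ Δ₂ Δ₃ : Bunch} : BEquiv Δ₁ Δ₂ → BEquiv Δ₂ Δ₃ → BEquiv Δ₁ Δ₃
  | commaComm (Δ₁ Δ₂ : Bunch) : BEquiv (.comma Δ₁ Δ₂) (.comma Δ₂ Δ₁)
  | semicComm (Δ₁ Δ₂ : Bunch) : BEquiv (.semic Δ₁ Δ₂) (.semic Δ₂ Δ₁)
  | commaAssoc (Δ₁ Δ₂ Δ₃ : Bunch) :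
      BEquiv (.comma Δ₁ (.comma Δ₂ Δ₃)) (.comma (.comma Δ₁ Δ₂) Δ₃)
  | semicAssoc (Δ₁ Δ₂ Δ₃ : Bunch) :
      BEquiv (.semic Δ₁ (.semic Δ₂ Δ₃)) (.semic (.semic Δ₁ Δ₂) Δ₃)
  | commaUnit (Δ : Bunch) : BEquiv (.comma Δ .mempty) Δ
  | semicUnit (Δ : Bunch) : BEquiv (.semic Δ .aempty) Δ
  | ctx (C : BCtx) {Δ Δ' : Bunch} : BEquiv Δ Δ' → BEquiv (C.fill Δ) (C.fill Δ')

/-- Cut-free sequent calculus for BI, with the axiom rule restricted to atoms. -/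
inductive Proves : Bunch → Frml → Prop
  | ax (a : Nat) : Proves (.frml (.atom a)) (.atom a)
  | equiv {Δ Δ' : Bunch} {φ : Frml} :
      Proves Δ' φ → BEquiv Δ Δ' → Proves Δ φ
  | weaken (C : BCtx) {Δ₁ Δ₂ : Bunch} {φ : Frml} :
      Proves (C.fill Δ₁) φ → Proves (C.fill (.semic Δ₁ Δ₂)) φ
  | contract (C : BCtx) {Δ₁ : Bunch} {φ : Frml} :
      Proves (C.fill (.semic Δ₁ Δ₁)) φ → Proves (C.fill Δ₁) φ
  | empR : Proves .mempty .emp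
  | empL (C : BCtx) {φ : Frml} :
      Proves (C.fill .mempty) φ → Proves (C.fill (.frml .emp)) φ
  | sepR {Δ₁ Δ₂ : Bunch} {φ ψ : Frml} :
      Proves Δ₁ φ → Proves Δ₂ ψ → Proves (.comma Δ₁ Δ₂) (.sep φ ψ)
  | sepL (C : BCtx) {φ ψ χ : Frml} :
      Proves (C.fill (.comma (.frml φ) (.frml ψ))) χ →
      Proves (C.fill (.frml (.sep φ ψ))) χ
  | wandR {Δ : Bunch} {φ ψ : Frml} :
      Proves (.comma Δ (.frml φ)) ψ → Proves Δ (.wand φ ψ)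
  | wandL (C : BCtx) {Δ₁ Δ₂ : Bunch} {φ ψ χ : Frml} :
      Proves Δ₁ φ → Proves (C.fill (.comma Δ₂ (.frml ψ))) χ →
      Proves (C.fill (.comma (.comma Δ₁ Δ₂) (.frml (.wand φ ψ)))) χ
  | topR : Proves .aempty .top
  | topL (C : BCtx) {φ : Frml} :
      Proves (C.fill .aempty) φ → Proves (C.fill (.frml .top)) φ
  | andR {Δ₁ Δ₂ : Bunch} {φ ψ : Frml} :
      Proves Δ₁ φ → Proves Δ₂ ψ → Proves (.semic Δ₁ Δ₂) (.and φ ψ)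
  | andL (C : BCtx) {φ ψ χ : Frml} :
      Proves (C.fill (.semic (.frml φ) (.frml ψ))) χ →
      Proves (C.fill (.frml (.and φ ψ))) χ
  | impR {Δ : Bunch} {φ ψ : Frml} :
      Proves (.semic Δ (.frml φ)) ψ → Proves Δ (.imp φ ψ)
  | impL (C : BCtx) {Δ₁ Δ₂ : Bunch} {φ ψ χ : Frml} :
      Proves Δ₁ φ → Proves (C.fill (.semic Δ₂ (.frml ψ))) χ →
      Proves (C.fill (.semic (.semic Δ₁ Δ₂) (.frml (.imp φ ψ)))) χ
  | botL (C : BCtx) {φ : Frml} : Proves (C.fill (.frml .bot)) φ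
  | orR1 {Δ : Bunch} {φ ψ : Frml} : Proves Δ φ → Proves Δ (.or φ ψ)
  | orR2 {Δ : Bunch} {φ ψ : Frml} : Proves Δ ψ → Proves Δ (.or φ ψ)
  | orL (C : BCtx) {φ ψ χ : Frml} :
      Proves (C.fill (.frml φ)) χ → Proves (C.fill (.frml ψ)) χ →
      Proves (C.fill (.frml (.or φ ψ))) χ

/-- The formula collapse `⟨Δ⟩` of a bunch. -/
def Bunch.collapse : Bunch → Frml
  | .frml φ => φ
  | .mempty => .emp
  | .aempty => .top
  | .comma Δ₁ Δ₂ => .sep Δ₁.collapse Δ₂.collapse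
  | .semic Δ₁ Δ₂ => .and Δ₁.collapse Δ₂.collapse

/-!
Induct on `Π`, peeling off the outermost node it shares with `Π'`. If both holes lie on the
same side of that node we recurse; if they lie on different sides, the two holes are independent
and may be filled in either order. `Π'` cannot be the bare hole unless `Π` is, since `Π'(φ)` is
then a formula leaf.
-/

namespace BCtx

def comp : BCtx → BCtx → BCtx
  | .hole, C => C
  | .commaL E Γ, C => .commaL (E.comp C) Γ
  | .commaR Γ E, C => .commaR Γ (E.comp C)
  | .semicL E Γ, C => .semicL (E.comp C) Γ
  | .semicR Γ E, C => .semicR Γ (E.comp C)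

@[simp]
theorem fill_comp (E C : BCtx) (Δ : Bunch) : (E.comp C).fill Δ = E.fill (C.fill Δ) := by
  induction E <;> simp_all [comp, fill]

/-- The hole of `P'` lies inside the bunch `Δ` filling the hole of `P`. -/
def Nested (P P' : BCtx) (Δ Δ' : Bunch) : Prop :=
  ∃ P₀ : BCtx, Δ = P₀.fill Δ' ∧ ∀ Γ : Bunch, P'.fill Γ = P.fill (P₀.fill Γ)

/-- The holes of `P` and `P'` are disjoint positions of one bunch, holding `Δ` and `Δ'`. -/
def Apart (P P' : BCtx) (Δ Δ' : Bunch) : Prop :=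
  ∃ P₀ P₁ : Bunch → BCtx,
    (∀ Λ : Bunch, P.fill Λ = (P₀ Λ).fill Δ') ∧
    (∀ Λ : Bunch, P'.fill Λ = (P₁ Λ).fill Δ) ∧
    (∀ Λ Λ' : Bunch, (P₀ Λ).fill Λ' = (P₁ Λ').fill Λ)

theorem nested_hole {P' : BCtx} {Δ Δ' : Bunch} (h : Δ = P'.fill Δ') : Nested hole P' Δ Δ' :=
  ⟨P', h, fun _ => rfl⟩

theorem Nested.comp_left {P P' : BCtx} {Δ Δ' : Bunch} (E : BCtx) (h : Nested P P' Δ Δ') :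
    Nested (E.comp P) (E.comp P') Δ Δ' := by
  obtain ⟨P₀, hΔ, hP'⟩ := h
  exact ⟨P₀, hΔ, fun Γ => by rw [fill_comp, fill_comp, hP']⟩

theorem Apart.symm {P P' : BCtx} {Δ Δ' : Bunch} (h : Apart P P' Δ Δ') : Apart P' P Δ' Δ := by
  obtain ⟨P₀, P₁, hP, hP', hswap⟩ := h
  exact ⟨P₁, P₀, hP', hP, fun Λ Λ' => (hswap Λ' Λ).symm⟩

theorem Apart.comp_left {P P' : BCtx} {Δ Δ' : Bunch} (E : BCtx) (h : Apart P P' Δ Δ') :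
    Apart (E.comp P) (E.comp P') Δ Δ' := by
  obtain ⟨P₀, P₁, hP, hP', hswap⟩ := h
  exact ⟨fun Λ => E.comp (P₀ Λ), fun Λ => E.comp (P₁ Λ),
    fun Λ => by simp only [fill_comp, hP], fun Λ => by simp only [fill_comp, hP'],
    fun Λ Λ' => by simp only [fill_comp, hswap]⟩

theorem apart_commaL_commaR (C C' : BCtx) (Δ Δ' : Bunch) :
    Apart (commaL C (C'.fill Δ')) (commaR (C.fill Δ) C') Δ Δ' :=
  ⟨fun Λ => commaR (C.fill Λ) C', fun Λ => commaL C (C'.fill Λ),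
    fun _ => rfl, fun _ => rfl, fun _ _ => rfl⟩

theorem apart_semicL_semicR (C C' : BCtx) (Δ Δ' : Bunch) :
    Apart (semicL C (C'.fill Δ')) (semicR (C.fill Δ) C') Δ Δ' :=
  ⟨fun Λ => semicR (C.fill Λ) C', fun Λ => semicL C (C'.fill Λ),
    fun _ => rfl, fun _ => rfl, fun _ _ => rfl⟩

theorem nested_or_apart_of_fill_eq {P P' : BCtx} {Δ : Bunch} {φ : Frml}
    (h : P.fill Δ = P'.fill (.frml φ)) :
    Nested P P' Δ (.frml φ) ∨ Apart P P' Δ (.frml φ) := by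
  induction P generalizing P' with
  | hole => exact .inl (nested_hole h)
  | commaL C Γ ih =>
    cases P' with
    | commaL C' Γ' =>
      obtain ⟨hC, rfl⟩ := Bunch.comma.inj h
      exact (ih hC).imp (.comp_left (commaL hole Γ)) (.comp_left (commaL hole Γ))
    | commaR Γ' C' =>
      obtain ⟨rfl, rfl⟩ := Bunch.comma.inj h
      exact .inr (apart_commaL_commaR C C' Δ _)
    | _ => cases h
  | commaR Γ C ih =>
    cases P' with
    | commaL C' Γ' =>
      obtain ⟨rfl, rfl⟩ := Bunch.comma.inj h
      exact .inr (apart_commaL_commaR C' C _ Δ).symm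
    | commaR Γ' C' =>
      obtain ⟨rfl, hC⟩ := Bunch.comma.inj h
      exact (ih hC).imp (.comp_left (commaR Γ hole)) (.comp_left (commaR Γ hole))
    | _ => cases h
  | semicL C Γ ih =>
    cases P' with
    | semicL C' Γ' =>
      obtain ⟨hC, rfl⟩ := Bunch.semic.inj h
      exact (ih hC).imp (.comp_left (semicL hole Γ)) (.comp_left (semicL hole Γ))
    | semicR Γ' C' =>
      obtain ⟨rfl, rfl⟩ := Bunch.semic.inj h
      exact .inr (apart_semicL_semicR C C' Δ _)
    | _ => cases h
  | semicR Γ C ih =>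
    cases P' with
    | semicL C' Γ' =>
      obtain ⟨rfl, rfl⟩ := Bunch.semic.inj h
      exact .inr (apart_semicL_semicR C' C _ Δ).symm
    | semicR Γ' C' =>
      obtain ⟨rfl, hC⟩ := Bunch.semic.inj h
      exact (ih hC).imp (.comp_left (semicR Γ hole)) (.comp_left (semicR Γ hole))
    | _ => cases h

end BCtx

/-- decomposition of bunches: if `Π(Δ) = Π'(φ)` then either the
formula `φ` occurs inside `Δ`, or it occurs in the context `Π`, in which case the
two decompositions commute. -/
theorem bunch_decomp_ctx (P P' : BCtx) (Δ : Bunch) (φ : Frml)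
    (h : P.fill Δ = P'.fill (.frml φ)) :
    (∃ P₀ : BCtx, Δ = P₀.fill (.frml φ) ∧
      ∀ Γ : Bunch, P'.fill Γ = P.fill (P₀.fill Γ)) ∨
    (∃ P₀ P₁ : Bunch → BCtx,
      (∀ Λ : Bunch, P.fill Λ = (P₀ Λ).fill (.frml φ)) ∧
      (∀ Λ : Bunch, P'.fill Λ = (P₁ Λ).fill Δ) ∧
      (∀ Λ Λ' : Bunch, (P₀ Λ).fill Λ' = (P₁ Λ').fill Λ)) :=
  BCtx.nested_or_apart_of_fill_eq h
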